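/- Let a > 0, α > 0, b > 0 and 0 ≤ r₀ < R be real numbers. Then ∫_{r₀}^{R} γ(a, b r^α) · r dr = ∑_{n=0}^{∞} (−1)^n b^{a+n} (R^{αa+αn+2} − r₀^{αa+αn+2}) / (n! (a+n)(αa+αn+2)), where the series converges absolutely. (This is the series expansion of the outage probability of Corollary 1; dividing by b^a and keeping the n = 0 term gives the high-SNR asymptotics.) -/

import Mathlib

/-!
Expand `e^{-t} = ∑ (-t)^n / n!` and integrate termwise to get
`γ(a, x) = ∑ (-1)^n x^{a+n} / (n! (a+n))`; substituting `x = b r^α`, multiplying by `r` and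
integrating termwise once more over `[r₀, R]` gives the series. Both interchanges of sum and
integral are legitimate because the integrals of the absolute values of the terms form a
summable series: it is dominated by a multiple of the exponential series of `x`, resp. `b R^α`.
-/

open MeasureTheory

/-- Lower incomplete gamma function `γ(a, x) = ∫₀ˣ t^(a-1) e^(-t) dt`. -/
noncomputable def lowerGamma (a x : ℝ) : ℝ := ∫ t in (0:ℝ)..x, t ^ (a - 1) * Real.exp (-t)

open intervalIntegral

theorem integral_tsum_mul_rpow_sub_one {u v : ℝ} (hu : 0 ≤ u) (huv : u ≤ v) {c q : ℕ → ℝ}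
    (hq : ∀ n, 0 < q n) (hs : Summable fun n => |c n * ((v ^ q n - u ^ q n) / q n)|) :
    ∫ t in u..v, ∑' n, c n * t ^ (q n - 1) = ∑' n, c n * ((v ^ q n - u ^ q n) / q n) := by
  have hexp : ∀ n, -1 < q n - 1 := fun n => by linarith [hq n]
  have hint : ∀ n, ∫ t in u..v, t ^ (q n - 1) = (v ^ q n - u ^ q n) / q n := fun n => by
    rw [integral_rpow (Or.inl (hexp n)), sub_add_cancel]
  have hint_nonneg : ∀ n, 0 ≤ (v ^ q n - u ^ q n) / q n := fun n =>
    div_nonneg (sub_nonneg.2 (Real.rpow_le_rpow hu huv (hq n).le)) (hq n).le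
  have hnorm : ∀ n, ∫ t in Set.Ioc u v, ‖c n * t ^ (q n - 1)‖ =
      |c n * ((v ^ q n - u ^ q n) / q n)| := fun n => by
    rw [abs_mul, abs_of_nonneg (hint_nonneg n), ← hint n, integral_of_le huv,
      ← MeasureTheory.integral_const_mul]
    refine setIntegral_congr_fun measurableSet_Ioc fun t ht => ?_
    rw [norm_mul, Real.norm_eq_abs, Real.norm_of_nonneg (Real.rpow_nonneg (hu.trans ht.1.le) _)]
  rw [integral_of_le huv, ← integral_tsum_of_summable_integral_norm
    (fun n => ((intervalIntegrable_rpow' (hexp n)).1.const_mul _)) (by simpa only [hnorm])]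
  refine tsum_congr fun n => ?_
  rw [MeasureTheory.integral_const_mul, ← integral_of_le huv, hint]

theorem summable_rpow_add_div_factorial_mul {a x : ℝ} (ha : 0 < a) (hx : 0 ≤ x) :
    Summable fun n : ℕ => x ^ (a + n) / (n.factorial * (a + n)) := by
  refine Summable.of_nonneg_of_le (fun n => by positivity) (fun n => ?_)
    ((Real.summable_pow_div_factorial x).mul_left (x ^ a / a))
  have han : a ≤ a + n := le_add_of_nonneg_right n.cast_nonneg
  have han' : a + n ≠ 0 := (ha.trans_le han).ne'
  calc x ^ (a + n) / (n.factorial * (a + n))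
      ≤ x ^ (a + n) / (n.factorial * a) := by gcongr
    _ = x ^ a / a * (x ^ n / n.factorial) := by
      rw [Real.rpow_add' hx han', Real.rpow_natCast]
      ring

theorem rpow_sub_one_mul_exp_neg_eq_tsum (a : ℝ) {t : ℝ} (ht : 0 < t) :
    t ^ (a - 1) * Real.exp (-t) = ∑' n : ℕ, (-1) ^ n / n.factorial * t ^ (a + n - 1) := by
  rw [Real.exp_eq_exp_ℝ, NormedSpace.exp_eq_tsum_div, ← tsum_mul_left]
  refine tsum_congr fun n => ?_
  rw [add_sub_right_comm, Real.rpow_add_natCast ht.ne', neg_pow]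
  ring

theorem lowerGamma_eq_tsum {a x : ℝ} (ha : 0 < a) (hx : 0 ≤ x) :
    lowerGamma a x = ∑' n : ℕ, (-1) ^ n * x ^ (a + n) / (n.factorial * (a + n)) := by
  have hq : ∀ n : ℕ, 0 < a + n := fun n => by positivity
  have hterm : ∀ n : ℕ, (-1) ^ n / n.factorial * ((x ^ (a + n) - 0 ^ (a + n)) / (a + n)) =
      (-1) ^ n * x ^ (a + n) / (n.factorial * (a + n)) := fun n => by
    rw [Real.zero_rpow (hq n).ne', sub_zero, mul_div_assoc', div_mul_eq_mul_div, div_div]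
  have hs : Summable fun n : ℕ =>
      |(-1) ^ n / n.factorial * ((x ^ (a + n) - 0 ^ (a + n)) / (a + n))| := by
    refine (summable_rpow_add_div_factorial_mul ha hx).congr fun n => ?_
    rw [hterm, abs_div, abs_mul, abs_pow, abs_neg, abs_one, one_pow, one_mul,
      abs_of_nonneg (by positivity), abs_of_pos (by positivity)]
  have hcongr : ∀ᵐ t, t ∈ Set.uIoc 0 x →
      t ^ (a - 1) * Real.exp (-t) = ∑' n : ℕ, (-1) ^ n / n.factorial * t ^ (a + n - 1) :=
    Filter.Eventually.of_forall fun t ht =>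
      rpow_sub_one_mul_exp_neg_eq_tsum a ((Set.uIoc_of_le hx ▸ ht).1)
  rw [lowerGamma, integral_congr_ae hcongr,
    integral_tsum_mul_rpow_sub_one le_rfl hx (q := fun n : ℕ => a + n) hq hs]
  exact tsum_congr hterm

theorem lowerGamma_mul_rpow_mul_eq_tsum {a b α r : ℝ} (ha : 0 < a) (hb : 0 ≤ b) (hr : 0 < r) :
    lowerGamma a (b * r ^ α) * r =
      ∑' n : ℕ, (-1) ^ n * b ^ (a + n) / (n.factorial * (a + n)) * r ^ (α * a + α * n + 2 - 1) := by
  rw [lowerGamma_eq_tsum ha (by positivity), ← tsum_mul_right]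
  refine tsum_congr fun n => ?_
  have hpow : (b * r ^ α) ^ (a + n) * r = b ^ (a + n) * r ^ (α * a + α * n + 2 - 1) := by
    rw [Real.mul_rpow hb (Real.rpow_nonneg hr.le α), ← Real.rpow_mul hr.le, mul_assoc,
      ← Real.rpow_add_one hr.ne']
    ring_nf
  rw [div_mul_eq_mul_div, mul_assoc, hpow, div_mul_eq_mul_div, mul_assoc]

theorem summable_abs_integral_lowerGamma_series {a α b r₀ R : ℝ} (ha : 0 < a) (hα : 0 ≤ α)
    (hb : 0 ≤ b) (hr₀ : 0 ≤ r₀) (hR : r₀ ≤ R) :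
    Summable fun n : ℕ => |(-1) ^ n * b ^ (a + n) / (n.factorial * (a + n)) *
      ((R ^ (α * a + α * n + 2) - r₀ ^ (α * a + α * n + 2)) / (α * a + α * n + 2))| := by
  have hR₀ : 0 ≤ R := hr₀.trans hR
  refine Summable.of_nonneg_of_le (fun n => abs_nonneg _) (fun n => ?_)
    ((summable_rpow_add_div_factorial_mul ha (by positivity : 0 ≤ b * R ^ α)).mul_left (R ^ 2 / 2))
  have han : 0 < a + n := by positivity
  have hq : 2 ≤ α * a + α * n + 2 := by nlinarith [n.cast_nonneg (α := ℝ)]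
  have hdiff : 0 ≤ R ^ (α * a + α * n + 2) - r₀ ^ (α * a + α * n + 2) :=
    sub_nonneg.2 (Real.rpow_le_rpow hr₀ hR (by linarith))
  have hRq : R ^ (α * a + α * n + 2) = (R ^ α) ^ (a + n) * R ^ 2 := by
    rw [← Real.rpow_mul hR₀, ← Real.rpow_natCast, ← Real.rpow_add' hR₀ (by push_cast; linarith)]
    ring_nf
  calc _ = b ^ (a + n) / (n.factorial * (a + n)) *
          ((R ^ (α * a + α * n + 2) - r₀ ^ (α * a + α * n + 2)) / (α * a + α * n + 2)) := by
        rw [abs_mul, abs_of_nonneg (div_nonneg hdiff (by linarith))]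
        simp only [abs_div, abs_mul, abs_pow, abs_neg, abs_one, one_pow, one_mul, Nat.abs_cast,
          abs_of_pos han, abs_of_nonneg (Real.rpow_nonneg hb _)]
    _ ≤ b ^ (a + n) / (n.factorial * (a + n)) * (R ^ (α * a + α * n + 2) / 2) := by
        gcongr
        exact sub_le_self _ (Real.rpow_nonneg hr₀ _)
    _ = R ^ 2 / 2 * ((b * R ^ α) ^ (a + n) / (n.factorial * (a + n))) := by
        rw [hRq, Real.mul_rpow hb (Real.rpow_nonneg hR₀ α)]
        ring

theorem stmt_2 (a α b r₀ R : ℝ) (ha : 0 < a) (hα : 0 < α) (hb : 0 < b)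
    (hr₀ : 0 ≤ r₀) (hR : r₀ < R) :
    Summable (fun n : ℕ => |(-1 : ℝ) ^ n * b ^ (a + n) *
      (R ^ (α * a + α * n + 2) - r₀ ^ (α * a + α * n + 2)) /
      (n.factorial * (a + n) * (α * a + α * n + 2))|) ∧
    (∫ r in r₀..R, lowerGamma a (b * r ^ α) * r) =
      ∑' n : ℕ, (-1 : ℝ) ^ n * b ^ (a + n) *
        (R ^ (α * a + α * n + 2) - r₀ ^ (α * a + α * n + 2)) /
        (n.factorial * (a + n) * (α * a + α * n + 2)) := by
  set c : ℕ → ℝ := fun n => (-1) ^ n * b ^ (a + n) / (n.factorial * (a + n))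
  set q : ℕ → ℝ := fun n => α * a + α * n + 2
  have hq : ∀ n, 0 < q n := fun n => by positivity
  have hterm : ∀ n : ℕ, (-1 : ℝ) ^ n * b ^ (a + n) * (R ^ q n - r₀ ^ q n) /
      (n.factorial * (a + n) * q n) = c n * ((R ^ q n - r₀ ^ q n) / q n) :=
    fun n => (div_mul_div_comm _ _ _ _).symm
  have hs : Summable fun n => |c n * ((R ^ q n - r₀ ^ q n) / q n)| :=
    summable_abs_integral_lowerGamma_series ha hα.le hb.le hr₀ hR.le
  have hcongr : ∀ᵐ r, r ∈ Set.uIoc r₀ R →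
      lowerGamma a (b * r ^ α) * r = ∑' n, c n * r ^ (q n - 1) :=
    Filter.Eventually.of_forall fun r hr =>
      lowerGamma_mul_rpow_mul_eq_tsum ha hb.le (hr₀.trans_lt (Set.uIoc_of_le hR.le ▸ hr).1)
  refine ⟨hs.congr fun n => congrArg abs (hterm n).symm, ?_⟩
  rw [integral_congr_ae hcongr, integral_tsum_mul_rpow_sub_one hr₀ hR.le hq hs]
  exact tsum_congr fun n => (hterm n).symm
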